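/- In the frequency-domain model of an LCMT, assume the coherence functions ω ↦ C(X i ω, X j ω) are measurable for all pairs of nodes i, j. Let a and b be distinct nodes that are not adjacent in the tree. Then there exists a node c adjacent to a such that d(a, c) ≤ d(a, b). If, in addition, h m ω ≠ 0 for every node m ≠ r and every ω, then there exists a node c adjacent to a with d(a, c) < d(a, b). -/

import Mathlib

open scoped InnerProductSpace

/-- The coherence of two vectors of a complex inner product space
(inner product conjugate-linear in the first argument):
`C(u, v) = ‖⟪u, v⟫‖² / (‖u‖² · ‖v‖²)`. -/
noncomputable def coherence {H : Type*} [NormedAddCommGroup H]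
    [InnerProductSpace ℂ H] (u v : H) : ℝ :=
  ‖⟪u, v⟫_ℂ‖ ^ 2 / (‖u‖ ^ 2 * ‖v‖ ^ 2)

/-- The coherence-based distance between two frequency-indexed families of
vectors: `d(f, g) = ( (1/(2π)) ∫_{-π}^{π} (1 − C(f ω, g ω)) dω )^{1/2}`. -/
noncomputable def cohDist {H : Type*} [NormedAddCommGroup H]
    [InnerProductSpace ℂ H] (f g : ℝ → H) : ℝ :=
  Real.sqrt ((1 / (2 * Real.pi)) *
    ∫ ω in (-Real.pi)..Real.pi, (1 - coherence (f ω) (g ω)))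

/-!
At a fixed frequency, the noise `ρ i` is orthogonal to the signal `X j` unless `i` lies on the
path from `j` to the root. Let `c` be the neighbour of `a` on the path to `b`. Then one of
`X a`, `X b` is a multiple of `X c` plus a vector orthogonal to the other two signals, and this
makes the coherence multiplicative: `C(a, b) = C(a, c) · C(c, b) ≤ C(a, c)`. Signals at distinct
nodes are never proportional, so `C(c, b) < 1`, and `C(a, c) > 0` as soon as the transfer
function on the edge `{a, c}` does not vanish. Integrating over the frequencies gives the two
inequalities between coherence distances.
-/

section Coherence

variable {H : Type*} [NormedAddCommGroup H] [InnerProductSpace ℂ H]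

theorem coherence_comm (u v : H) : coherence u v = coherence v u := by
  rw [coherence, coherence, ← inner_conj_symm, RCLike.norm_conj, mul_comm]

theorem coherence_nonneg (u v : H) : 0 ≤ coherence u v := by
  unfold coherence; positivity

theorem coherence_le_one (u v : H) : coherence u v ≤ 1 := by
  refine div_le_one_of_le₀ ?_ (by positivity)
  rw [← mul_pow]
  exact pow_le_pow_left₀ (norm_nonneg _) (norm_inner_le_norm u v) 2

theorem coherence_pos {u v : H} (hu : u ≠ 0) (hv : v ≠ 0) (huv : ⟪u, v⟫_ℂ ≠ 0) :
    0 < coherence u v := by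
  unfold coherence
  have := norm_pos_iff.2 hu
  have := norm_pos_iff.2 hv
  have := norm_pos_iff.2 huv
  positivity

theorem coherence_lt_one {u v : H} (hu : u ≠ 0) (hv : v ≠ 0)
    (hnp : ∀ t : ℂ, t ≠ 0 → v ≠ t • u) : coherence u v < 1 := by
  have hlt : ‖⟪u, v⟫_ℂ‖ < ‖u‖ * ‖v‖ := by
    refine (norm_inner_le_norm u v).lt_of_ne fun heq => ?_
    obtain ⟨t, ht, hvt⟩ := (norm_inner_eq_norm_iff hu hv).1 heq
    exact hnp t ht hvt
  refine (div_lt_one (by positivity)).2 ?_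
  rw [← mul_pow]
  exact pow_lt_pow_left₀ hlt (norm_nonneg _) two_ne_zero

theorem coherence_eq_mul_of_eq_smul_add {A B C s : H} {t : ℂ} (hA : A = t • C + s)
    (hsC : ⟪s, C⟫_ℂ = 0) (hsB : ⟪s, B⟫_ℂ = 0) :
    coherence A B = coherence A C * coherence C B := by
  rcases eq_or_ne C 0 with rfl | hC
  · simp [coherence, hA, hsB]
  have hAB : ⟪A, B⟫_ℂ = (starRingEnd ℂ) t * ⟪C, B⟫_ℂ := by
    rw [hA, inner_add_left, inner_smul_left, hsB, add_zero]
  have hAC : ⟪A, C⟫_ℂ = (starRingEnd ℂ) t * ((‖C‖ : ℂ) ^ 2) := by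
    rw [hA, inner_add_left, inner_smul_left, hsC, add_zero, inner_self_eq_norm_sq_to_K]
    norm_cast
  have hC' : ‖C‖ ≠ 0 := norm_ne_zero_iff.2 hC
  simp only [coherence, hAB, hAC, norm_mul, RCLike.norm_conj, norm_pow, Complex.norm_real,
    norm_norm]
  rw [div_mul_div_comm]
  field_simp

end Coherence

section CohDist

variable {H : Type*} [NormedAddCommGroup H] [InnerProductSpace ℂ H] {f g g' : ℝ → H}

theorem intervalIntegrable_one_sub_coherence
    (hm : Measurable fun ω => coherence (f ω) (g ω)) (a b : ℝ) :
    IntervalIntegrable (fun ω => 1 - coherence (f ω) (g ω)) MeasureTheory.volume a b := by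
  refine (intervalIntegrable_const (c := (1 : ℝ))).mono_fun'
    (measurable_const.sub hm).aestronglyMeasurable (MeasureTheory.ae_of_all _ fun ω => ?_)
  simp only [Real.norm_eq_abs, abs_le]
  constructor <;> linarith [coherence_nonneg (f ω) (g ω), coherence_le_one (f ω) (g ω)]

theorem cohDist_le_cohDist_of_coherence_le (hm : Measurable fun ω => coherence (f ω) (g ω))
    (hm' : Measurable fun ω => coherence (f ω) (g' ω))
    (hle : ∀ ω, coherence (f ω) (g' ω) ≤ coherence (f ω) (g ω)) :
    cohDist f g ≤ cohDist f g' := by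
  refine Real.sqrt_le_sqrt (mul_le_mul_of_nonneg_left ?_ (by positivity))
  refine intervalIntegral.integral_mono_on (by linarith [Real.pi_pos])
    (intervalIntegrable_one_sub_coherence hm _ _) (intervalIntegrable_one_sub_coherence hm' _ _)
    fun ω _ => ?_
  linarith [hle ω]

theorem cohDist_lt_cohDist_of_coherence_lt (hm : Measurable fun ω => coherence (f ω) (g ω))
    (hm' : Measurable fun ω => coherence (f ω) (g' ω))
    (hlt : ∀ ω, coherence (f ω) (g' ω) < coherence (f ω) (g ω)) :
    cohDist f g < cohDist f g' := by
  have hi := intervalIntegrable_one_sub_coherence hm (-Real.pi) Real.pi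
  have hi' := intervalIntegrable_one_sub_coherence hm' (-Real.pi) Real.pi
  refine Real.sqrt_lt_sqrt (mul_nonneg (by positivity) ?_)
    (mul_lt_mul_of_pos_left ?_ (by positivity))
  · exact intervalIntegral.integral_nonneg (by linarith [Real.pi_pos])
      fun ω _ => sub_nonneg.2 (coherence_le_one _ _)
  · rw [← sub_pos, ← intervalIntegral.integral_sub hi' hi]
    exact intervalIntegral.intervalIntegral_pos_of_pos (hi'.sub hi)
      (fun ω => by linarith [hlt ω]) (by linarith [Real.pi_pos])

end CohDist

section RootedTree

variable {V : Type*} {r : V} {par : V → V}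

/-- `i` lies on the path from `j` to the root (`i = j` allowed). -/
def IsAncestor (par : V → V) (i j : V) : Prop := ∃ n, par^[n] j = i

theorem IsAncestor.refl (par : V → V) (j : V) : IsAncestor par j j := ⟨0, rfl⟩

theorem IsAncestor.of_par {i j : V} (h : IsAncestor par i (par j)) : IsAncestor par i j :=
  let ⟨n, hn⟩ := h
  ⟨n + 1, hn⟩

theorem IsAncestor.trans {i j k : V} (hij : IsAncestor par i j) (hjk : IsAncestor par j k) :
    IsAncestor par i k := by
  obtain ⟨m, rfl⟩ := hij
  obtain ⟨n, rfl⟩ := hjk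
  exact ⟨m + n, Function.iterate_add_apply par m n k⟩

theorem par_induction (hreach : ∀ j, ∃ n, par^[n] j = r) {P : V → Prop} (root : P r)
    (step : ∀ j, j ≠ r → P (par j) → P j) (j : V) : P j := by
  obtain ⟨n, hn⟩ := hreach j
  induction n generalizing j with
  | zero =>
    obtain rfl : j = r := hn
    exact root
  | succ n ih =>
    by_cases hj : j = r
    · exact hj ▸ root
    · exact step j hj (ih (par j) hn)

/-- A cycle through `j` would keep `j` away from the root, which is a fixed point. -/
theorem iterate_succ_ne_self (hroot : par r = r) (hreach : ∀ j, ∃ n, par^[n] j = r) {j : V}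
    (hj : j ≠ r) (n : ℕ) : par^[n + 1] j ≠ j := by
  intro hper
  obtain ⟨m, hm⟩ := hreach j
  have hcycle : par^[(n + 1) * m] j = j := (Function.IsPeriodicPt.mul_const hper m).eq
  apply hj
  rw [← hcycle, show (n + 1) * m = n * m + m by ring, Function.iterate_add_apply, hm,
    Function.iterate_fixed hroot]

theorem not_isAncestor_par (hroot : par r = r) (hreach : ∀ j, ∃ n, par^[n] j = r) {j : V}
    (hj : j ≠ r) : ¬ IsAncestor par j (par j) :=
  fun ⟨n, hn⟩ => iterate_succ_ne_self hroot hreach hj n hn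

theorem IsAncestor.antisymm (hroot : par r = r) (hreach : ∀ j, ∃ n, par^[n] j = r) {i j : V}
    (hij : IsAncestor par i j) (hji : IsAncestor par j i) : i = j := by
  obtain ⟨m, rfl⟩ := hij
  obtain ⟨n, hn⟩ := hji
  by_cases hj : j = r
  · rw [hj, Function.iterate_fixed hroot]
  rcases Nat.eq_zero_or_eq_succ_pred (n + m) with hnm | hnm
  · rw [show m = 0 by omega, Function.iterate_zero_apply]
  · rw [← Function.iterate_add_apply, hnm] at hn
    exact absurd hn (iterate_succ_ne_self hroot hreach hj _)

theorem exists_child_isAncestor {i j : V} (hij : i ≠ j) (h : IsAncestor par i j) :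
    ∃ c, par c = i ∧ c ≠ i ∧ IsAncestor par c j := by
  obtain ⟨n, hn⟩ := h
  induction n generalizing j with
  | zero => exact absurd hn.symm hij
  | succ n ih =>
    by_cases hpj : par j = i
    · exact ⟨j, hpj, hij.symm, .refl par j⟩
    · obtain ⟨c, hci, hc, hcj⟩ := ih (Ne.symm hpj) hn
      exact ⟨c, hci, hc, hcj.of_par⟩

/-- `c` is the neighbour of `a` on the tree path from `a` to `b`: either the path leaves `a`
upwards, or it goes down through the child `c` of `a`. -/
def IsNextOnPath (par : V → V) (a b c : V) : Prop :=
  (par a = c ∧ ¬ IsAncestor par a b) ∨ (par c = a ∧ IsAncestor par c b)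

theorem IsNextOnPath.adj {a b c : V} (h : IsNextOnPath par a b c) : par a = c ∨ par c = a :=
  h.imp And.left And.left

theorem exists_isNextOnPath (hroot : par r = r) (hreach : ∀ j, ∃ n, par^[n] j = r) {a b : V}
    (hab : a ≠ b) : ∃ c, c ≠ a ∧ IsNextOnPath par a b c := by
  by_cases hanc : IsAncestor par a b
  · obtain ⟨c, hca, hc, hcb⟩ := exists_child_isAncestor hab hanc
    exact ⟨c, hc, .inr ⟨hca, hcb⟩⟩
  · have har : a ≠ r := by
      rintro rfl
      exact hanc (hreach b)
    refine ⟨par a, fun hpa => not_isAncestor_par hroot hreach har ?_, .inl ⟨rfl, hanc⟩⟩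
    rw [hpa]
    exact .refl par a

end RootedTree

/-- The LCMT at a single frequency `ω`: `h j`, `ρ j`, `X j` stand for `h j ω`, `ρ j ω`,
`X j ω`. -/
structure IsLinearCascade {H V : Type*} [NormedAddCommGroup H] [InnerProductSpace ℂ H]
    (r : V) (par : V → V) (h : V → ℂ) (ρ X : V → H) : Prop where
  par_root : par r = r
  exists_iterate_eq_root : ∀ j, ∃ n, par^[n] j = r
  inner_noise_eq_zero : ∀ i j, i ≠ j → ⟪ρ i, ρ j⟫_ℂ = 0
  noise_ne_zero : ∀ j, ρ j ≠ 0
  signal_root : X r = ρ r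
  signal_eq : ∀ j, j ≠ r → X j = h j • X (par j) + ρ j

namespace IsLinearCascade

variable {H V : Type*} [NormedAddCommGroup H] [InnerProductSpace ℂ H] {r : V} {par : V → V}
  {h : V → ℂ} {ρ X : V → H} (L : IsLinearCascade r par h ρ X)
include L

theorem inner_noise_signal_eq_zero {i j : V} (hij : ¬ IsAncestor par i j) :
    ⟪ρ i, X j⟫_ℂ = 0 := by
  induction j using par_induction L.exists_iterate_eq_root with
  | root =>
    rw [L.signal_root]
    exact L.inner_noise_eq_zero i r fun hir => hij (hir ▸ .refl par i)
  | step j hj ih =>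
    rw [L.signal_eq j hj, inner_add_right, inner_smul_right, ih fun h' => hij h'.of_par, mul_zero,
      zero_add]
    exact L.inner_noise_eq_zero i j fun hij' => hij (hij' ▸ .refl par i)

theorem isAncestor_of_inner_noise_signal_ne_zero {i j : V} (hij : ⟪ρ i, X j⟫_ℂ ≠ 0) :
    IsAncestor par i j :=
  not_not.1 fun hn => hij (L.inner_noise_signal_eq_zero hn)

theorem inner_noise_signal_self (j : V) : ⟪ρ j, X j⟫_ℂ = ⟪ρ j, ρ j⟫_ℂ := by
  by_cases hj : j = r
  · rw [hj, L.signal_root]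
  · rw [L.signal_eq j hj, inner_add_right, inner_smul_right,
      L.inner_noise_signal_eq_zero (not_isAncestor_par L.par_root L.exists_iterate_eq_root hj),
      mul_zero, zero_add]

theorem inner_noise_signal_self_ne_zero (j : V) : ⟪ρ j, X j⟫_ℂ ≠ 0 := by
  rw [L.inner_noise_signal_self]
  exact inner_self_ne_zero.2 (L.noise_ne_zero j)

theorem signal_ne_zero (j : V) : X j ≠ 0 := fun h0 =>
  L.inner_noise_signal_self_ne_zero j (by rw [h0, inner_zero_right])

/-- If `X j = t • X i`, then `ρ i` and `ρ j` are both non-orthogonal to both signals, so `i` and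
`j` are ancestors of each other. -/
theorem coherence_signal_lt_one {i j : V} (hij : i ≠ j) : coherence (X i) (X j) < 1 := by
  refine coherence_lt_one (L.signal_ne_zero i) (L.signal_ne_zero j) fun t ht hji => hij ?_
  have hi : IsAncestor par i j := L.isAncestor_of_inner_noise_signal_ne_zero <| by
    rw [hji, inner_smul_right]
    exact mul_ne_zero ht (L.inner_noise_signal_self_ne_zero i)
  have hj : IsAncestor par j i := L.isAncestor_of_inner_noise_signal_ne_zero fun h0 =>
    L.inner_noise_signal_self_ne_zero j (by rw [hji, inner_smul_right, h0, mul_zero])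
  exact hi.antisymm L.par_root L.exists_iterate_eq_root hj

theorem inner_signal_par {j : V} (hj : j ≠ r) :
    ⟪X (par j), X j⟫_ℂ = h j * ⟪X (par j), X (par j)⟫_ℂ := by
  rw [L.signal_eq j hj, inner_add_right, inner_smul_right, ← inner_conj_symm (X (par j)) (ρ j),
    L.inner_noise_signal_eq_zero (not_isAncestor_par L.par_root L.exists_iterate_eq_root hj),
    map_zero, add_zero]

theorem coherence_pos_of_adj {a c : V} (hca : c ≠ a) (hadj : par a = c ∨ par c = a)
    (hh : ∀ m, m ≠ r → h m ≠ 0) : 0 < coherence (X a) (X c) := by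
  have hpos : ∀ j, j ≠ r → 0 < coherence (X (par j)) (X j) := fun j hj =>
    coherence_pos (L.signal_ne_zero _) (L.signal_ne_zero j) <| by
      rw [L.inner_signal_par hj]
      exact mul_ne_zero (hh j hj) (inner_self_ne_zero.2 (L.signal_ne_zero _))
  rcases hadj with rfl | rfl
  · rw [coherence_comm]
    exact hpos a fun har => hca (har ▸ L.par_root)
  · exact hpos c fun hcr => hca (hcr ▸ L.par_root.symm)

/-- `R` is a combination of the noises on the path from `b` up to `c`, `c` excluded. -/
theorem exists_eq_smul_add {b c : V} (hcb : IsAncestor par c b) :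
    ∃ (G : ℂ) (R : H),
      X b = G • X c + R ∧ ∀ m, IsAncestor par m c → ⟪R, X m⟫_ℂ = 0 := by
  obtain ⟨n, hn⟩ := hcb
  induction n generalizing b with
  | zero =>
    obtain rfl : b = c := hn
    exact ⟨1, 0, by rw [one_smul, add_zero], fun _ _ => inner_zero_left _⟩
  | succ n ih =>
    by_cases hb : b = r
    · refine ⟨1, 0, ?_, fun _ _ => inner_zero_left _⟩
      rw [one_smul, add_zero, ← hn, hb, Function.iterate_fixed L.par_root]
    obtain ⟨G, R, hdec, hR⟩ := ih hn
    refine ⟨h b * G, h b • R + ρ b, ?_, fun m hm => ?_⟩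
    · rw [L.signal_eq b hb, hdec, smul_add, smul_smul, add_assoc]
    · rw [inner_add_left, inner_smul_left, hR m hm, mul_zero, zero_add]
      exact L.inner_noise_signal_eq_zero fun hbm => not_isAncestor_par L.par_root
        L.exists_iterate_eq_root hb (hbm.trans (hm.trans ⟨n, hn⟩))

theorem coherence_eq_mul_of_isNextOnPath {a b c : V} (hnext : IsNextOnPath par a b c) :
    coherence (X a) (X b) = coherence (X a) (X c) * coherence (X c) (X b) := by
  rcases hnext with ⟨rfl, hab⟩ | ⟨rfl, hcb⟩
  · have har : a ≠ r := fun har => hab (har ▸ L.exists_iterate_eq_root b)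
    exact coherence_eq_mul_of_eq_smul_add (L.signal_eq a har)
      (L.inner_noise_signal_eq_zero (not_isAncestor_par L.par_root L.exists_iterate_eq_root har))
      (L.inner_noise_signal_eq_zero hab)
  · obtain ⟨G, R, hdec, hR⟩ := L.exists_eq_smul_add hcb
    rw [coherence_comm (X (par c)) (X b),
      coherence_eq_mul_of_eq_smul_add hdec (hR c (.refl par c)) (hR (par c) ⟨1, rfl⟩),
      coherence_comm (X b) (X c), coherence_comm (X c) (X (par c)), mul_comm]

end IsLinearCascade

theorem lcmt_incident_node_theorem_general
    {H : Type*} [NormedAddCommGroup H] [InnerProductSpace ℂ H]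
    {V : Type*}
    (r : V) (par : V → V)
    (hroot : par r = r)
    (hreach : ∀ j, ∃ n, par^[n] j = r)
    (h : V → ℝ → ℂ) (ρ : V → ℝ → H)
    (horth : ∀ (ω : ℝ) (a b : V), a ≠ b → ⟪ρ a ω, ρ b ω⟫_ℂ = 0)
    (hwp : ∀ (j : V) (ω : ℝ), ρ j ω ≠ 0)
    (X : V → ℝ → H)
    (hXr : ∀ ω, X r ω = ρ r ω)
    (hX : ∀ j, j ≠ r → ∀ ω, X j ω = h j ω • X (par j) ω + ρ j ω)
    (hmeas : ∀ i j : V, Measurable fun ω => coherence (X i ω) (X j ω))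
    (a b : V) (hab : a ≠ b)
    (hnotadj : ¬ (par a = b ∨ par b = a)) :
    (∃ c : V, c ≠ a ∧ (par a = c ∨ par c = a) ∧
      cohDist (X a) (X c) ≤ cohDist (X a) (X b)) ∧
    ((∀ (m : V) (ω : ℝ), m ≠ r → h m ω ≠ 0) →
      ∃ c : V, c ≠ a ∧ (par a = c ∨ par c = a) ∧
        cohDist (X a) (X c) < cohDist (X a) (X b)) := by
  have L : ∀ ω, IsLinearCascade r par (h · ω) (ρ · ω) (X · ω) := fun ω =>
    ⟨hroot, hreach, horth ω, (hwp · ω), hXr ω, fun j hj => hX j hj ω⟩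
  obtain ⟨c, hca, hnext⟩ := exists_isNextOnPath hroot hreach hab
  have hcb : c ≠ b := by
    rintro rfl
    exact hnotadj hnext.adj
  have hmul ω := (L ω).coherence_eq_mul_of_isNextOnPath hnext
  have hle ω : coherence (X a ω) (X b ω) ≤ coherence (X a ω) (X c ω) := by
    rw [hmul ω]
    exact mul_le_of_le_one_right (coherence_nonneg _ _) (coherence_le_one _ _)
  have hlt (hh : ∀ (m : V) (ω : ℝ), m ≠ r → h m ω ≠ 0) ω :
      coherence (X a ω) (X b ω) < coherence (X a ω) (X c ω) := by
    rw [hmul ω]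
    exact mul_lt_of_lt_one_right ((L ω).coherence_pos_of_adj hca hnext.adj (hh · ω))
      ((L ω).coherence_signal_lt_one hcb)
  exact ⟨⟨c, hca, hnext.adj, cohDist_le_cohDist_of_coherence_le (hmeas a c) (hmeas a b) hle⟩,
    fun hh => ⟨c, hca, hnext.adj,
      cohDist_lt_cohDist_of_coherence_lt (hmeas a c) (hmeas a b) (hlt hh)⟩⟩

/-- Theorem 1 of the paper: in an LCMT, for any two distinct,
non-adjacent nodes `a` and `b` there is a node `c` adjacent to `a` with
`d(a, c) ≤ d(a, b)`; under the nondegeneracy assumption that no transfer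
function vanishes, the inequality can be made strict. -/
theorem lcmt_incident_node_theorem
    {H : Type*} [NormedAddCommGroup H] [InnerProductSpace ℂ H]
    {V : Type*} [Fintype V]
    (r : V) (par : V → V)
    (hroot : par r = r)
    (hpar : ∀ j, j ≠ r → par j ≠ j)
    (hreach : ∀ j, ∃ n, par^[n] j = r)
    (h : V → ℝ → ℂ) (ρ : V → ℝ → H)
    (horth : ∀ (ω : ℝ) (a b : V), a ≠ b → ⟪ρ a ω, ρ b ω⟫_ℂ = 0)
    (hwp : ∀ (j : V) (ω : ℝ), ρ j ω ≠ 0)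
    (X : V → ℝ → H)
    (hXr : ∀ ω, X r ω = ρ r ω)
    (hX : ∀ j, j ≠ r → ∀ ω, X j ω = h j ω • X (par j) ω + ρ j ω)
    (hmeas : ∀ i j : V, Measurable fun ω => coherence (X i ω) (X j ω))
    (a b : V) (hab : a ≠ b)
    (hnotadj : ¬ (par a = b ∨ par b = a)) :
    (∃ c : V, c ≠ a ∧ (par a = c ∨ par c = a) ∧
      cohDist (X a) (X c) ≤ cohDist (X a) (X b)) ∧
    ((∀ (m : V) (ω : ℝ), m ≠ r → h m ω ≠ 0) →
      ∃ c : V, c ≠ a ∧ (par a = c ∨ par c = a) ∧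
        cohDist (X a) (X c) < cohDist (X a) (X b)) :=
  lcmt_incident_node_theorem_general r par hroot hreach h ρ horth hwp X hXr hX hmeas a b hab hnotadj
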